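/- arXiv:2003.08194 — 2 statements merged into one kernel-verified Lean document; each statement's English description precedes it below -/
import Mathlib

section
/- The function f(ψ,τ) = (1/τ)·ln(1 + 1/ψ) is jointly convex on the domain {(ψ,τ) : ψ > 0, τ > 1}. -/
/-!
Since `∫₀¹ (s + ψ)⁻¹ ds = ln (1 + 1/ψ)`, the function is `∫₀¹ (s + ψ)⁻¹ τ⁻¹ ds`. Each integrand is
convex in `(ψ, τ)`: the map `(u, v) ↦ u⁻¹ v⁻¹ = exp (-ln u - ln v)` is log-convex on the positive
quadrant, and a translate of it is still convex. An integral of convex functions is convex.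
-/

open Real Set intervalIntegral

theorem ConvexOn.exp_comp {E : Type*} [AddCommGroup E] [Module ℝ E] {s : Set E} {f : E → ℝ}
    (hf : ConvexOn ℝ s f) : ConvexOn ℝ s (fun x => exp (f x)) :=
  ⟨hf.1, fun _ hx _ hy _ _ ha hb hab =>
    (exp_le_exp.2 (hf.2 hx hy ha hb hab)).trans (convexOn_exp.2 trivial trivial ha hb hab)⟩

theorem convexOn_intervalIntegral {E : Type*} [AddCommGroup E] [Module ℝ E] {S : Set E}
    {a b : ℝ} (hab : a ≤ b) {g : E → ℝ → ℝ} (hconv : ∀ t ∈ Icc a b, ConvexOn ℝ S (g · t))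
    (hint : ∀ x ∈ S, IntervalIntegrable (g x) MeasureTheory.volume a b) :
    ConvexOn ℝ S (fun x => ∫ t in a..b, g x t) := by
  refine ⟨(hconv a ⟨le_rfl, hab⟩).1, fun x hx y hy μ ν hμ hν hμν => ?_⟩
  have hxy : μ • x + ν • y ∈ S := (hconv a ⟨le_rfl, hab⟩).1 hx hy hμ hν hμν
  simp only [smul_eq_mul]
  rw [← integral_const_mul, ← integral_const_mul,
    ← integral_add ((hint x hx).const_mul μ) ((hint y hy).const_mul ν)]
  exact integral_mono_on hab (hint _ hxy) (((hint x hx).const_mul μ).add ((hint y hy).const_mul ν))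
    fun t ht => (hconv t ht).2 hx hy hμ hν hμν

theorem convexOn_inv_mul_inv :
    ConvexOn ℝ (Ioi (0 : ℝ) ×ˢ Ioi (0 : ℝ)) (fun p : ℝ × ℝ => p.1⁻¹ * p.2⁻¹) := by
  have hQ : Convex ℝ (Ioi (0 : ℝ) ×ˢ Ioi (0 : ℝ)) := (convex_Ioi 0).prod (convex_Ioi 0)
  have hlog : ConvexOn ℝ (Ioi 0) (fun t => -log t) := strictConcaveOn_log_Ioi.concaveOn.neg
  have h := (((hlog.comp_linearMap (LinearMap.fst ℝ ℝ ℝ)).subset (fun _ hp => hp.1) hQ).add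
    ((hlog.comp_linearMap (LinearMap.snd ℝ ℝ ℝ)).subset (fun _ hp => hp.2) hQ)).exp_comp
  refine h.congr fun p ⟨hp₁, hp₂⟩ => ?_
  simp [exp_add, exp_neg, exp_log hp₁, exp_log hp₂]

theorem convexOn_add_inv_mul_inv {t : ℝ} (ht : 0 ≤ t) :
    ConvexOn ℝ (Ioi (0 : ℝ) ×ˢ Ioi (0 : ℝ)) (fun p : ℝ × ℝ => (t + p.1)⁻¹ * p.2⁻¹) :=
  ((convexOn_inv_mul_inv.translate_right (t, 0)).subset
    (fun _ hp => ⟨add_pos_of_nonneg_of_pos ht hp.1, by simpa using hp.2⟩)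
    ((convex_Ioi 0).prod (convex_Ioi 0))).congr fun _ _ => by simp

theorem integral_inv_add_of_pos {ψ : ℝ} (hψ : 0 < ψ) :
    ∫ t in (0 : ℝ)..1, (t + ψ)⁻¹ = log (1 + 1 / ψ) := by
  rw [integral_comp_add_right (fun t => t⁻¹), integral_inv]
  · congr 1; field_simp; ring
  · rw [uIcc_of_le (by linarith)]; exact fun h => by linarith [h.1]

/-- The function f(ψ,τ) = (1/τ)·ln(1 + 1/ψ) is jointly convex on
{(ψ,τ) : ψ > 0, τ > 1}. -/
theorem rate_slack_convex :
    ConvexOn ℝ {x : ℝ × ℝ | 0 < x.1 ∧ 1 < x.2}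
      (fun x : ℝ × ℝ => (1 / x.2) * Real.log (1 + 1 / x.1)) := by
  have hint : ∀ x ∈ Ioi (0 : ℝ) ×ˢ Ioi (0 : ℝ),
      IntervalIntegrable (fun t => (t + x.1)⁻¹ * x.2⁻¹) MeasureTheory.volume 0 1 := by
    refine fun x hx => (ContinuousOn.mul (ContinuousOn.inv₀ (by fun_prop) fun t ht => ?_)
      continuousOn_const).intervalIntegrable
    rw [uIcc_of_le zero_le_one] at ht
    exact (add_pos_of_nonneg_of_pos ht.1 hx.1).ne'
  have hconv := convexOn_intervalIntegral zero_le_one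
    (fun t ht => convexOn_add_inv_mul_inv ht.1) hint
  refine (hconv.subset (fun x hx => ⟨hx.1, zero_lt_one.trans (mem_Ioi.1 hx.2)⟩)
    ((convex_Ioi 0).prod (convex_Ioi 1))).congr fun x hx => ?_
  simp only [integral_mul_const, integral_inv_add_of_pos hx.1]
  ring
end

section
/- For all ψ, ψ₀ > 0 and τ, τ₀ > 1, the first-order Taylor lower bound holds: (1/τ)·ln(1+1/ψ) ≥ A + B·ψ + C·τ, where A = 2 ln(1+1/ψ₀)/τ₀ + 1/((ψ₀+1)τ₀), B = −1/(ψ₀(ψ₀+1)τ₀), and C = −ln(1+1/ψ₀)/τ₀², with equality when (ψ,τ) = (ψ₀,τ₀). -/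
/-!
Write `(1/τ) log(1 + 1/ψ) = s(ψ)² / τ` with `s = √(log (1 + 1/ψ))`. The function `s` is convex on
`ψ > 0`: its derivative is `-1 / (2 √q)` with `q(ψ) = (ψ(ψ+1))² log(1 + 1/ψ)`, and `q` is
increasing because `log(1 + 1/ψ) ≥ 1/(ψ+1)`. The map `(x, τ) ↦ x²/τ` lies above its tangent plane
at `(s(ψ₀), τ₀)`, and that plane is increasing in `x`, so it may be evaluated at the tangent line
of `s` at `ψ₀` instead of at `s(ψ)`; expanding gives the stated affine minorant.
-/

open Real Set

lemma one_div_add_one_le_log_one_add_one_div {x : ℝ} (hx : 0 < x) :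
    1 / (x + 1) ≤ log (1 + 1 / x) := by
  have h := one_sub_inv_le_log_of_pos (show 0 < 1 + 1 / x by positivity)
  have : 1 - (1 + 1 / x)⁻¹ = 1 / (x + 1) := by field_simp; ring
  linarith

lemma hasDerivAt_log_one_add_one_div {x : ℝ} (hx : 0 < x) :
    HasDerivAt (fun x => log (1 + 1 / x)) (-(1 / (x * (x + 1)))) x := by
  have h := ((hasDerivAt_inv hx.ne').const_add 1).log (by positivity)
  simp only [← one_div] at h
  exact h.congr_deriv (by field_simp)

lemma monotoneOn_sq_mul_log_one_add_one_div :
    MonotoneOn (fun x => (x * (x + 1)) ^ 2 * log (1 + 1 / x)) (Ioi 0) := by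
  have hd : ∀ x ∈ Ioi (0 : ℝ), HasDerivAt (fun x => (x * (x + 1)) ^ 2 * log (1 + 1 / x))
      (x * (x + 1) * (2 * (2 * x + 1) * log (1 + 1 / x) - 1)) x := by
    intro x hx
    have hp := ((hasDerivAt_id' x).fun_mul ((hasDerivAt_id' x).add_const 1)).fun_pow 2
    exact (hp.mul (hasDerivAt_log_one_add_one_div hx)).congr_deriv (by field_simp; ring)
  refine monotoneOn_of_deriv_nonneg (convex_Ioi 0)
    (fun x hx => (hd x hx).continuousAt.continuousWithinAt)
    (fun x hx => (hd x (interior_subset hx)).differentiableAt.differentiableWithinAt)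
    (fun x hx => ?_)
  rw [interior_Ioi] at hx
  have hx₀ : 0 < x := hx
  rw [(hd x hx).deriv]
  have h := one_div_add_one_le_log_one_add_one_div hx₀
  rw [div_le_iff₀' (by positivity)] at h
  have : 0 ≤ 2 * (2 * x + 1) * log (1 + 1 / x) - 1 := by nlinarith
  positivity

lemma hasDerivAt_sqrt_log_one_add_one_div {x : ℝ} (hx : 0 < x) :
    HasDerivAt (fun x => √(log (1 + 1 / x)))
      (-1 / (2 * √((x * (x + 1)) ^ 2 * log (1 + 1 / x)))) x := by
  have hlog : 0 < log (1 + 1 / x) := log_pos (by simp [hx])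
  refine ((hasDerivAt_log_one_add_one_div hx).sqrt hlog.ne').congr_deriv ?_
  rw [sqrt_mul (by positivity), sqrt_sq (by positivity)]
  field_simp

lemma convexOn_sqrt_log_one_add_one_div :
    ConvexOn ℝ (Ioi 0) (fun x => √(log (1 + 1 / x))) := by
  refine MonotoneOn.convexOn_of_deriv (convex_Ioi 0)
    (fun x hx => (hasDerivAt_sqrt_log_one_add_one_div hx).continuousAt.continuousWithinAt)
    (fun x hx => (hasDerivAt_sqrt_log_one_add_one_div
      (interior_subset hx)).differentiableAt.differentiableWithinAt) ?_
  rw [interior_Ioi]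
  intro x hx y hy hxy
  rw [(hasDerivAt_sqrt_log_one_add_one_div hx).deriv,
    (hasDerivAt_sqrt_log_one_add_one_div hy).deriv, neg_div, neg_div, neg_le_neg_iff]
  have hx₀ : (0 : ℝ) < x := hx
  have hlog : 0 < log (1 + 1 / x) := log_pos (by simp [hx₀])
  gcongr 1 / (2 * √?_)
  exact monotoneOn_sq_mul_log_one_add_one_div hx hy hxy

lemma ConvexOn.add_mul_sub_le_of_hasDerivAt {S : Set ℝ} {f : ℝ → ℝ} {x y f' : ℝ}
    (hf : ConvexOn ℝ S f) (hx : x ∈ S) (hy : y ∈ S) (hf' : HasDerivAt f f' x) :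
    f x + f' * (y - x) ≤ f y := by
  rcases lt_trichotomy x y with hxy | rfl | hyx
  · have h := hf.le_slope_of_hasDerivAt hx hy hxy hf'
    rw [slope_def_field, le_div_iff₀ (sub_pos.2 hxy)] at h
    linarith
  · simp
  · have h := hf.slope_le_of_hasDerivAt hy hx hyx hf'
    rw [slope_def_field, div_le_iff₀ (sub_pos.2 hyx)] at h
    linarith

lemma two_mul_mul_div_sub_sq_mul_div_sq_le_sq_div {a x t t₀ : ℝ} (ht : 0 < t) (ht₀ : 0 < t₀) :
    2 * a * x / t₀ - a ^ 2 * t / t₀ ^ 2 ≤ x ^ 2 / t := by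
  have hsq : 0 ≤ (x * t₀ - a * t) ^ 2 / (t * t₀ ^ 2) := by positivity
  have : (x * t₀ - a * t) ^ 2 / (t * t₀ ^ 2) = x ^ 2 / t - (2 * a * x / t₀ - a ^ 2 * t / t₀ ^ 2) := by
    field_simp; ring
  linarith

/-- First-order Taylor lower bound of f(ψ,τ) = (1/τ)·ln(1+1/ψ) at (ψ₀,τ₀),
with equality at the expansion point. -/
theorem rate_tangent_bound (ψ ψ₀ τ τ₀ : ℝ) (hψ : 0 < ψ) (hψ₀ : 0 < ψ₀)
    (hτ : 1 < τ) (hτ₀ : 1 < τ₀) :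
    (1 / τ) * Real.log (1 + 1 / ψ) ≥
      (2 * Real.log (1 + 1 / ψ₀) / τ₀ + 1 / ((ψ₀ + 1) * τ₀))
        + (-(1 / (ψ₀ * (ψ₀ + 1) * τ₀))) * ψ
        + (-(Real.log (1 + 1 / ψ₀) / τ₀ ^ 2)) * τ ∧
    (1 / τ₀) * Real.log (1 + 1 / ψ₀) =
      (2 * Real.log (1 + 1 / ψ₀) / τ₀ + 1 / ((ψ₀ + 1) * τ₀))
        + (-(1 / (ψ₀ * (ψ₀ + 1) * τ₀))) * ψ₀
        + (-(Real.log (1 + 1 / ψ₀) / τ₀ ^ 2)) * τ₀ := by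
  have hL₀ : 0 < log (1 + 1 / ψ₀) := log_pos (by simp [hψ₀])
  have hL : 0 < log (1 + 1 / ψ) := log_pos (by simp [hψ])
  refine ⟨?_, by field_simp; ring⟩
  have hsqrt := convexOn_sqrt_log_one_add_one_div.add_mul_sub_le_of_hasDerivAt hψ₀ hψ
    (hasDerivAt_sqrt_log_one_add_one_div hψ₀)
  have hquad := two_mul_mul_div_sub_sq_mul_div_sq_le_sq_div (a := √(log (1 + 1 / ψ₀)))
    (x := √(log (1 + 1 / ψ))) (by linarith : 0 < τ) (by linarith : 0 < τ₀)
  rw [sqrt_mul (by positivity), sqrt_sq (by positivity)] at hsqrt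
  rw [sq_sqrt hL.le] at hquad
  set L₀ := log (1 + 1 / ψ₀)
  calc _ = 2 * √L₀ * (√L₀ + -1 / (2 * (ψ₀ * (ψ₀ + 1) * √L₀)) * (ψ - ψ₀)) / τ₀
        - √L₀ ^ 2 * τ / τ₀ ^ 2 := by
        field_simp; rw [sq_sqrt hL₀.le]; ring
    _ ≤ 2 * √L₀ * √(log (1 + 1 / ψ)) / τ₀ - √L₀ ^ 2 * τ / τ₀ ^ 2 := by gcongr
    _ ≤ _ := by rwa [one_div_mul_eq_div]
end
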